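/- Generalized q-Euler-Cassini: for all integers N, m ≥ 0, ℓ ≥ 1, det of the 2×2 matrix with rows (f(N+(m+1)ℓ,x,s), f((m+1)ℓ,x,s)) and (f(N+mℓ,x,q^ℓ s), f(mℓ,x,q^ℓ s)) equals (-1)^{mℓ-1} s^{mℓ} q^{mℓ((m+2)ℓ-1)/2} f(ℓ,x,s) f(N,x,q^{(m+1)ℓ}s). -/
import Mathlib

/-- Carlitz q-Fibonacci polynomials. -/
def qFib (q x s : ℝ) : ℕ → ℝ
  | 0 => 0
  | 1 => 1
  | (n+2) => x * qFib q x s (n+1) + q^n * s * qFib q x s n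

lemma qFib_zero (q x s : ℝ) : qFib q x s 0 = 0 := rfl
lemma qFib_one (q x s : ℝ) : qFib q x s 1 = 1 := rfl
lemma qFib_rec (q x s : ℝ) (n : ℕ) :
    qFib q x s (n+2) = x * qFib q x s (n+1) + q^n * s * qFib q x s n := rfl

lemma tri_succ (a : ℕ) : (a+1)*a/2 = a*(a-1)/2 + a := by
  cases a with
  | zero => simp
  | succ k =>
    have h : (k+2)*(k+1) = (k+1)*k + 2*(k+1) := by ring
    rw [Nat.succ_sub_one, h, Nat.add_mul_div_left _ _ (by norm_num : 0 < 2)]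

lemma cassini (q x s : ℝ) (t : ℕ) : ∀ a : ℕ,
    qFib q x s (a+t+1) * qFib q x (q^t*s) a - qFib q x s (a+t) * qFib q x (q^t*s) (a+1)
      = (-1:ℝ)^(a+1) * s^a * q^(a*(a-1)/2 + a*t) * qFib q x s t := by
  intro a
  induction a with
  | zero => simp [qFib_zero, qFib_one]
  | succ a ih =>
    have h1 : qFib q x s (a+1+t+1) = x * qFib q x s (a+t+1) + q^(a+t) * s * qFib q x s (a+t) := by
      have : a+1+t+1 = (a+t)+2 := by omega
      rw [this, qFib_rec]
    have h2 : qFib q x (q^t*s) (a+2)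
        = x * qFib q x (q^t*s) (a+1) + q^a * (q^t*s) * qFib q x (q^t*s) a := qFib_rec ..
    have h3 : a+1+t = (a+t)+1 := by omega
    have hexp : (a+1)*(a+1-1)/2 + (a+1)*t = (a*(a-1)/2 + a*t) + (a+t) := by
      simp only [Nat.add_sub_cancel]
      rw [tri_succ]; ring_nf
    rw [h1, h3, h2, hexp, pow_add q _ (a+t), pow_succ (-1:ℝ), pow_succ s, pow_add q a t]
    linear_combination (-(q^a * q^t * s)) * ih

lemma eulerCassini (q x s : ℝ) (a t : ℕ) : ∀ N : ℕ,
    qFib q x s (N+a+t) * qFib q x (q^t*s) a - qFib q x s (a+t) * qFib q x (q^t*s) (N+a)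
      = (-1:ℝ)^(a+1) * s^a * q^(a*(a-1)/2 + a*t) * qFib q x s t * qFib q x (q^(a+t)*s) N := by
  have key : ∀ N : ℕ,
      (qFib q x s (N+a+t) * qFib q x (q^t*s) a - qFib q x s (a+t) * qFib q x (q^t*s) (N+a)
        = (-1:ℝ)^(a+1) * s^a * q^(a*(a-1)/2 + a*t) * qFib q x s t * qFib q x (q^(a+t)*s) N) ∧
      (qFib q x s (N+1+a+t) * qFib q x (q^t*s) a - qFib q x s (a+t) * qFib q x (q^t*s) (N+1+a)
        = (-1:ℝ)^(a+1) * s^a * q^(a*(a-1)/2 + a*t) * qFib q x s t * qFib q x (q^(a+t)*s) (N+1)) := by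
    intro N
    induction N with
    | zero =>
      constructor
      · simp [qFib_zero, qFib_one]
      · have e : 1+a+t = a+t+1 := by omega
        have e2 : 1+a = a+1 := by omega
        rw [e, e2, qFib_one]
        simpa [qFib_one] using cassini q x s t a
    | succ N ih =>
      obtain ⟨ih0, ih1⟩ := ih
      refine ⟨ih1, ?_⟩
      have h1 : qFib q x s (N+2+a+t)
          = x * qFib q x s (N+1+a+t) + q^(N+a+t) * s * qFib q x s (N+a+t) := by
        have e : N+2+a+t = (N+a+t)+2 := by omega
        have e1 : N+1+a+t = (N+a+t)+1 := by omega
        rw [e, e1, qFib_rec]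
      have h2 : qFib q x (q^t*s) (N+2+a)
          = x * qFib q x (q^t*s) (N+1+a) + q^(N+a) * (q^t*s) * qFib q x (q^t*s) (N+a) := by
        have e : N+2+a = (N+a)+2 := by omega
        have e1 : N+1+a = (N+a)+1 := by omega
        rw [e, e1, qFib_rec]
      have h3 : qFib q x (q^(a+t)*s) (N+2)
          = x * qFib q x (q^(a+t)*s) (N+1) + q^N * (q^(a+t)*s) * qFib q x (q^(a+t)*s) N :=
        qFib_rec ..
      rw [h1, h2, h3, pow_add q (N+a) t, pow_add q N a]
      rw [pow_add q a t] at ih0 ih1 ⊢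
      linear_combination x * ih1 + (q^N * q^a * q^t * s) * ih0
  exact fun N => (key N).1

theorem qEulerCassini_general (q x s : ℝ) (N m ℓ : ℕ) (hℓ : 1 ≤ ℓ) :
    Matrix.det !![qFib q x s (N + (m+1)*ℓ), qFib q x s ((m+1)*ℓ);
                  qFib q x (q^ℓ*s) (N + m*ℓ), qFib q x (q^ℓ*s) (m*ℓ)]
      = (-1 : ℝ)^((m*ℓ : ℤ) - 1) * s^(m*ℓ) * q^(m*ℓ*((m+2)*ℓ-1)/2)
        * qFib q x s ℓ * qFib q x (q^((m+1)*ℓ)*s) N := by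
  have hsign : (-1:ℝ)^((m*ℓ:ℤ)-1) = (-1:ℝ)^(m*ℓ+1) := by
    have h : ((m*ℓ:ℤ)-1) = ((m*ℓ+1 : ℕ) : ℤ) - 2 := by push_cast; ring
    rw [h, zpow_sub₀ (by norm_num : (-1:ℝ) ≠ 0), zpow_natCast]
    norm_num
  have hexp : m*ℓ*((m+2)*ℓ-1)/2 = (m*ℓ)*((m*ℓ)-1)/2 + (m*ℓ)*ℓ := by
    rcases Nat.eq_zero_or_pos (m*ℓ) with h | h
    · rw [h]; simp
    · have h1 : (m+2)*ℓ-1 = (m*ℓ-1) + 2*ℓ := by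
        have h2 : (m+2)*ℓ = m*ℓ + 2*ℓ := by ring
        omega
      rw [h1, Nat.mul_add, (by ring : m*ℓ*(2*ℓ) = 2*(m*ℓ*ℓ)),
        Nat.add_mul_div_left _ _ (by norm_num : 0 < 2)]
  have e1 : N + (m+1)*ℓ = N + m*ℓ + ℓ := by ring
  have e2 : (m+1)*ℓ = m*ℓ + ℓ := by ring
  rw [Matrix.det_fin_two_of, e1, e2, hsign, hexp]
  exact eulerCassini q x s (m*ℓ) ℓ N
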